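/- (Theorem on robustness to contamination.) Fix α ∈ (0,1) and B(μ,V) = { x ∈ ℝ^p : d(x,μ,V) < ln(1/α) }. Let F be the probability measure on ℝ^p with elliptical density f(x) = det(V0)^{−1/2} ψ(d(x,μ0,V0)), let H be any probability measure on ℝ^p, and suppose F is centrally a*-separable from H, i.e., there is a* > 0 with H(B(μ0, aV0)) = 0 for all 0 < a ≤ a*. Let π ∈ [0,1) and let P = (1−π)F + πH be the Huber contamination mixture. Then for every 0 < a ≤ a*, taking (μ,V) = (μ0, aV0), the truncated estimating equations hold under P: ∫_{B(μ,V)} e^{−d(x,μ,V)} (x−μ) dP(x) = 0 and ∫_{B(μ,V)} e^{−d(x,μ,V)} ( (x−μ)(x−μ)ᵀ − (d(x,μ,V)/p)·V ) dP(x) = 0. -/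

import Mathlib

open MeasureTheory Matrix Finset

/-- Mahalanobis-type squared distance `d(x, μ, V) = (x−μ)ᵀ V⁻¹ (x−μ)`. -/
noncomputable def mahal {p : ℕ} (x μ : EuclideanSpace ℝ (Fin p))
    (V : Matrix (Fin p) (Fin p) ℝ) : ℝ :=
  ∑ i, ∑ j, (x i - μ i) * V⁻¹ i j * (x j - μ j)

/-- The central region `B(μ,V) = {x : d(x,μ,V) < ln(1/α)}`. -/
noncomputable def centralRegion {p : ℕ} (α : ℝ) (μ : EuclideanSpace ℝ (Fin p))
    (V : Matrix (Fin p) (Fin p) ℝ) : Set (EuclideanSpace ℝ (Fin p)) :=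
  {x | mahal x μ V < Real.log (1 / α)}

/-!
On the central region the contamination `H` has no mass, so there `P` is `(1 - π) F`. The
truncation, the density and the exponential tilt all depend on `x` only through
`d(x, μ0, V0)` (note `d(x, μ0, a V0) = d(x, μ0, V0) / a`), so both integrands are a radial weight
`ρ(d(x, μ0, V0))` times `x - μ0`, resp. times `(x - μ0)(x - μ0)ᵀ - d/p • V0`. The first integral
vanishes by the symmetry `x ↦ 2 μ0 - x`. For the second, substitute `x = μ0 + S z` with
`S Sᵀ = V0`, which turns `d` into `‖z‖²`: coordinate reflections and transpositions show that a
radial weight has isotropic second moments, `∫ ρ(‖z‖²) z_k z_l = δ_kl / p • ∫ ρ(‖z‖²) ‖z‖²`, and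
transporting by `S` gives `(S Sᵀ)_ij / p • ∫ ρ(‖z‖²) ‖z‖²`, which is the `V0`-term.
-/

section LinearChangeOfVariables

variable {E F : Type*} [NormedAddCommGroup E] [NormedSpace ℝ E] [MeasurableSpace E] [BorelSpace E]
  [FiniteDimensional ℝ E] (μ : Measure E) [μ.IsAddHaarMeasure] [NormedAddCommGroup F]
  {T : E →ₗ[ℝ] E}

theorem integrable_comp_linearMap_iff (hT : LinearMap.det T ≠ 0) (g : E → F) :
    Integrable (fun x => g (T x)) μ ↔ Integrable g μ := by
  let e := (T.equivOfDetNeZero hT).toContinuousLinearEquiv.toHomeomorph.toMeasurableEquiv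
  have hmap : μ.map e = ENNReal.ofReal |(LinearMap.det T)⁻¹| • μ :=
    Measure.map_linearMap_addHaar_eq_smul_addHaar μ hT
  calc Integrable (fun x => g (T x)) μ ↔ Integrable g (μ.map e) := (integrable_map_equiv e g).symm
    _ ↔ Integrable g μ := by
      rw [hmap, integrable_smul_measure
        (ENNReal.ofReal_pos.mpr (abs_pos.mpr (inv_ne_zero hT))).ne' ENNReal.ofReal_ne_top]

theorem integral_comp_linearMap [NormedSpace ℝ F] (hT : LinearMap.det T ≠ 0) (g : E → F) :
    ∫ x, g (T x) ∂μ = |LinearMap.det T|⁻¹ • ∫ x, g x ∂μ := by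
  let e := (T.equivOfDetNeZero hT).toContinuousLinearEquiv.toHomeomorph.toMeasurableEquiv
  have hmap : μ.map e = ENNReal.ofReal |(LinearMap.det T)⁻¹| • μ :=
    Measure.map_linearMap_addHaar_eq_smul_addHaar μ hT
  calc ∫ x, g (T x) ∂μ = ∫ x, g x ∂(μ.map e) := (integral_map_equiv e g).symm
    _ = |LinearMap.det T|⁻¹ • ∫ x, g x ∂μ := by
      rw [hmap, integral_smul_measure, ENNReal.toReal_ofReal (abs_nonneg _), abs_inv]

end LinearChangeOfVariables

theorem integral_eq_zero_of_odd {G E : Type*} [MeasurableSpace G] [AddGroup G] [MeasurableNeg G]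
    [NormedAddCommGroup E] [NormedSpace ℝ E] {μ : Measure G} [μ.IsNegInvariant] {g : G → E}
    (hg : ∀ x, g (-x) = -g x) : ∫ x, g x ∂μ = 0 := by
  have h : (2 : ℝ) • ∫ x, g x ∂μ = 0 := by
    rw [two_smul]
    nth_rw 1 [← integral_neg_eq_self g μ]
    simp only [hg, integral_neg, neg_add_cancel]
  exact (smul_eq_zero.mp h).resolve_left two_ne_zero

theorem setIntegral_smul_withDensity_add_smul_eq {X E : Type*} [MeasurableSpace X]
    [NormedAddCommGroup E] [NormedSpace ℝ E] {μ H : Measure X} {f : X → ℝ} (hf : Measurable f)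
    {s : Set X} (hs : MeasurableSet s) (hHs : H s = 0) (c d : ENNReal) (g : X → E) :
    ∫ x in s, g x ∂(c • μ.withDensity (fun x => ENNReal.ofReal (f x)) + d • H) =
      c.toReal • ∫ x, s.indicator (fun x => (f x).toNNReal • g x) x ∂μ := by
  rw [Measure.restrict_add, Measure.restrict_smul, Measure.restrict_smul,
    Measure.restrict_eq_zero.mpr hHs, smul_zero, add_zero, integral_smul_measure,
    integral_indicator hs]
  exact congrArg _ (setIntegral_withDensity_eq_setIntegral_smul hf.real_toNNReal g hs)

theorem mul_exp_neg_inv_mul_le {a : ℝ} (ha : 0 < a) (u : ℝ) :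
    u * Real.exp (-(a⁻¹ * u)) ≤ a := by
  calc u * Real.exp (-(a⁻¹ * u)) = a * (a⁻¹ * u * Real.exp (-(a⁻¹ * u))) := by
        field_simp
    _ ≤ a * 1 := by
        gcongr
        exact (Real.mul_exp_neg_le_exp_neg_one _).trans (Real.exp_le_one_iff.mpr (by norm_num))
    _ = a := mul_one a

theorem Matrix.smul_inv {n : Type*} [Fintype n] [DecidableEq n] (a : ℝ) (V : Matrix n n ℝ) :
    (a • V)⁻¹ = a⁻¹ • V⁻¹ := by
  rcases eq_or_ne a 0 with rfl | ha
  · simp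
  by_cases hV : IsUnit V.det
  · exact inv_smul' V (Units.mk0 a ha) hV
  · have haV : ¬IsUnit (a • V).det := by
      simpa [det_smul, isUnit_iff_ne_zero, ha] using hV
    rw [nonsing_inv_apply_not_isUnit _ hV, nonsing_inv_apply_not_isUnit _ haV, smul_zero]

theorem Matrix.PosDef.exists_isUnit_det_mul_transpose_eq {n : Type*} [Fintype n] [DecidableEq n]
    {V : Matrix n n ℝ} (hV : V.PosDef) : ∃ S : Matrix n n ℝ, IsUnit S.det ∧ S * Sᵀ = V := by
  open scoped MatrixOrder in
  have hsq : CFC.sqrt V * CFC.sqrt V = V := CFC.sqrt_mul_sqrt_self V hV.posSemidef.nonneg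
  open scoped MatrixOrder in
  have hsymm : (CFC.sqrt V)ᵀ = CFC.sqrt V :=
    (conjTranspose_eq_transpose_of_trivial _).symm.trans
      (nonneg_iff_posSemidef.mp (CFC.sqrt_nonneg V)).isHermitian
  refine ⟨CFC.sqrt V, ?_, by rw [hsymm, hsq]⟩
  refine isUnit_of_mul_isUnit_left (y := (CFC.sqrt V).det) ?_
  rw [← det_mul, hsq]
  exact isUnit_iff_ne_zero.mpr hV.det_pos.ne'

section Isotropy

variable {ι : Type*} [Fintype ι]

theorem integral_radial_mul_apply_mul_apply_of_ne (w : ℝ → ℝ) {k l : ι} (hkl : k ≠ l) :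
    ∫ z : EuclideanSpace ℝ ι, w (‖z‖ ^ 2) * (z k * z l) = 0 := by
  classical
  let T : EuclideanSpace ℝ ι ≃ₗᵢ[ℝ] EuclideanSpace ℝ ι :=
    LinearIsometryEquiv.piLpCongrRight 2 fun i => if i = k then .neg ℝ else .refl ℝ ℝ
  have hT : ∀ z, w (‖T z‖ ^ 2) * (T z k * T z l) = -(w (‖z‖ ^ 2) * (z k * z l)) := by
    intro z
    rw [LinearIsometryEquiv.norm_map]
    simp [T, hkl.symm]
  have h := integral_comp T fun z => w (‖z‖ ^ 2) * (z k * z l)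
  simp only [hT, integral_neg] at h
  linarith

theorem integral_radial_mul_apply_sq_eq (w : ℝ → ℝ) (k l : ι) :
    ∫ z : EuclideanSpace ℝ ι, w (‖z‖ ^ 2) * z k ^ 2 =
      ∫ z : EuclideanSpace ℝ ι, w (‖z‖ ^ 2) * z l ^ 2 := by
  classical
  let T := LinearIsometryEquiv.piLpCongrLeft 2 ℝ ℝ (Equiv.swap k l)
  have h := integral_comp T fun z => w (‖z‖ ^ 2) * z l ^ 2
  simpa [T, LinearIsometryEquiv.piLpCongrLeft_apply] using h

theorem integrable_radial_mul_apply_mul_apply {w : ℝ → ℝ} (hw : Measurable w)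
    (hint : Integrable fun z : EuclideanSpace ℝ ι => w (‖z‖ ^ 2) * ‖z‖ ^ 2) (k l : ι) :
    Integrable fun z : EuclideanSpace ℝ ι => w (‖z‖ ^ 2) * (z k * z l) := by
  refine hint.mono (by fun_prop) (.of_forall fun z => ?_)
  simp only [norm_mul, norm_norm, sq]
  gcongr <;> exact PiLp.norm_apply_le z _

theorem integral_radial_mul_apply_mul_apply [DecidableEq ι] {w : ℝ → ℝ} (hw : Measurable w)
    (hint : Integrable fun z : EuclideanSpace ℝ ι => w (‖z‖ ^ 2) * ‖z‖ ^ 2) (k l : ι) :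
    ∫ z : EuclideanSpace ℝ ι, w (‖z‖ ^ 2) * (z k * z l) =
      (1 : Matrix ι ι ℝ) k l * (∫ z : EuclideanSpace ℝ ι, w (‖z‖ ^ 2) * ‖z‖ ^ 2) /
        Fintype.card ι := by
  rcases eq_or_ne k l with rfl | hkl
  · have hsum : ∀ z : EuclideanSpace ℝ ι, w (‖z‖ ^ 2) * ‖z‖ ^ 2 = ∑ m, w (‖z‖ ^ 2) * z m ^ 2 :=
      fun z => by rw [← Finset.mul_sum, ← EuclideanSpace.real_norm_sq_eq]
    have hcard : (Fintype.card ι : ℝ) ≠ 0 :=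
      Nat.cast_ne_zero.mpr (Fintype.card_pos_iff.mpr ⟨k⟩).ne'
    have hk : ∀ m, Integrable fun z : EuclideanSpace ℝ ι => w (‖z‖ ^ 2) * z m ^ 2 := fun m => by
      simpa only [sq] using integrable_radial_mul_apply_mul_apply hw hint m m
    rw [integral_congr_ae (.of_forall hsum), integral_finsetSum _ fun m _ => hk m,
      Finset.sum_congr rfl fun m _ => integral_radial_mul_apply_sq_eq w m k, Finset.sum_const,
      Finset.card_univ, nsmul_eq_mul, one_apply_eq, one_mul, mul_div_cancel_left₀ _ hcard]
    simp only [sq]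
  · rw [integral_radial_mul_apply_mul_apply_of_ne w hkl, one_apply_ne hkl, zero_mul, zero_div]

theorem integral_radial_mul_mulVec_moment_sub_eq_zero [DecidableEq ι] {w : ℝ → ℝ}
    (hw : Measurable w)
    (hint : Integrable fun z : EuclideanSpace ℝ ι => w (‖z‖ ^ 2) * ‖z‖ ^ 2)
    (S : Matrix ι ι ℝ) (i j : ι) :
    ∫ z : EuclideanSpace ℝ ι, w (‖z‖ ^ 2) *
      ((S *ᵥ z.ofLp) i * (S *ᵥ z.ofLp) j - ‖z‖ ^ 2 / Fintype.card ι * (S * Sᵀ) i j) = 0 := by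
  have hexp : ∀ z : EuclideanSpace ℝ ι,
      w (‖z‖ ^ 2) * ((S *ᵥ z.ofLp) i * (S *ᵥ z.ofLp) j - ‖z‖ ^ 2 / Fintype.card ι * (S * Sᵀ) i j) =
        (∑ k, ∑ l, S i k * S j l * (w (‖z‖ ^ 2) * (z k * z l))) -
          (S * Sᵀ) i j / Fintype.card ι * (w (‖z‖ ^ 2) * ‖z‖ ^ 2) := fun z => by
    simp only [mulVec, dotProduct]
    rw [mul_sub, Finset.sum_mul_sum, Finset.mul_sum]
    congr 1
    · exact Finset.sum_congr rfl fun k _ => by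
        rw [Finset.mul_sum]
        exact Finset.sum_congr rfl fun l _ => by ring
    · ring
  have hint' := integrable_radial_mul_apply_mul_apply hw hint
  rw [integral_congr_ae (.of_forall hexp), integral_sub
    (integrable_finsetSum _ fun k _ => integrable_finsetSum _ fun l _ => (hint' k l).const_mul _)
    (hint.const_mul _), integral_finsetSum _ fun k _ => integrable_finsetSum _ fun l _ =>
      (hint' k l).const_mul _]
  simp_rw [integral_finsetSum _ fun l _ => (hint' _ l).const_mul _, integral_const_mul,
    integral_radial_mul_apply_mul_apply hw hint]
  rw [sub_eq_zero, mul_apply, Finset.sum_div, Finset.sum_mul]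
  refine Finset.sum_congr rfl fun k _ => ?_
  rw [Finset.sum_eq_single k (fun l _ hlk => by rw [one_apply_ne hlk.symm]; ring) (by simp),
    one_apply_eq, transpose_apply]
  ring

end Isotropy

section Mahalanobis

variable {p : ℕ}

theorem mahal_smul (x μ : EuclideanSpace ℝ (Fin p)) (a : ℝ) (V : Matrix (Fin p) (Fin p) ℝ) :
    mahal x μ (a • V) = a⁻¹ * mahal x μ V := by
  simp only [mahal, Matrix.smul_inv, Matrix.smul_apply, smul_eq_mul, Finset.mul_sum]
  exact Finset.sum_congr rfl fun i _ => Finset.sum_congr rfl fun j _ => by ring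

theorem mahal_eq_dotProduct (x μ : EuclideanSpace ℝ (Fin p)) (V : Matrix (Fin p) (Fin p) ℝ) :
    mahal x μ V = (x - μ).ofLp ⬝ᵥ (V⁻¹ *ᵥ (x - μ).ofLp) := by
  simp only [mahal, dotProduct, mulVec, Finset.mul_sum, PiLp.sub_apply]
  exact Finset.sum_congr rfl fun i _ => Finset.sum_congr rfl fun j _ => by ring

theorem mahal_nonneg {V : Matrix (Fin p) (Fin p) ℝ} (hV : V.PosDef)
    (x μ : EuclideanSpace ℝ (Fin p)) : 0 ≤ mahal x μ V := by
  simpa [mahal_eq_dotProduct] using hV.inv.posSemidef.dotProduct_mulVec_nonneg (x - μ).ofLp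

theorem continuous_mahal (μ : EuclideanSpace ℝ (Fin p)) (V : Matrix (Fin p) (Fin p) ℝ) :
    Continuous fun x => mahal x μ V := by
  unfold mahal
  fun_prop

theorem mahal_add_toEuclideanLin {S : Matrix (Fin p) (Fin p) ℝ} (hS : IsUnit S.det)
    (μ z : EuclideanSpace ℝ (Fin p)) :
    mahal (μ + toEuclideanLin S z) μ (S * Sᵀ) = ‖z‖ ^ 2 := by
  have hSt : IsUnit Sᵀ.det := by rwa [det_transpose]
  rw [mahal_eq_dotProduct, add_sub_cancel_left, ofLp_toLpLin, toLin'_apply, Matrix.mul_inv_rev,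
    ← mulVec_mulVec, mulVec_mulVec _ S⁻¹, nonsing_inv_mul _ hS, one_mulVec, dotProduct_mulVec,
    ← vecMul_transpose, vecMul_vecMul, mul_nonsing_inv _ hSt, vecMul_one,
    EuclideanSpace.real_norm_sq_eq]
  simp [dotProduct, sq]

theorem centralRegion_smul (α : ℝ) (μ : EuclideanSpace ℝ (Fin p)) (V : Matrix (Fin p) (Fin p) ℝ)
    {a : ℝ} (ha : 0 < a) :
    centralRegion α μ (a • V) = (fun x => mahal x μ V) ⁻¹' Set.Iio (a * Real.log (1 / α)) := by
  ext x
  simp [centralRegion, mahal_smul, inv_mul_lt_iff₀ ha]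

theorem integral_radial_mahal_smul_sub_eq_zero (ρ : ℝ → ℝ) (μ : EuclideanSpace ℝ (Fin p))
    (V : Matrix (Fin p) (Fin p) ℝ) :
    ∫ x, ρ (mahal x μ V) • (x - μ) = 0 := by
  have heven : ∀ y, mahal (μ + -y) μ V = mahal (μ + y) μ V := fun y => by
    simp only [mahal, PiLp.add_apply, PiLp.neg_apply, add_sub_cancel_left]
    exact Finset.sum_congr rfl fun i _ => Finset.sum_congr rfl fun j _ => by ring
  rw [← integral_add_left_eq_self _ μ]
  exact integral_eq_zero_of_odd fun y => by simp only [heven, add_sub_cancel_left, smul_neg]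

theorem integral_radial_mahal_mul_moment_sub_eq_zero {ρ : ℝ → ℝ} (hρ : Measurable ρ)
    (μ : EuclideanSpace ℝ (Fin p)) {V : Matrix (Fin p) (Fin p) ℝ} (hV : V.PosDef)
    (hint : Integrable fun x => ρ (mahal x μ V) * mahal x μ V) (i j : Fin p) :
    ∫ x, ρ (mahal x μ V) * ((x i - μ i) * (x j - μ j) - mahal x μ V / p * V i j) = 0 := by
  obtain ⟨S, hS, rfl⟩ := hV.exists_isUnit_det_mul_transpose_eq
  have hT : LinearMap.det (toEuclideanLin S) ≠ 0 := by simpa using hS.ne_zero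
  set G : EuclideanSpace ℝ (Fin p) → ℝ := fun x =>
    ρ (mahal x μ (S * Sᵀ)) * ((x i - μ i) * (x j - μ j) - mahal x μ (S * Sᵀ) / p * (S * Sᵀ) i j)
  have hG : ∀ z, G (μ + toEuclideanLin S z) = ρ (‖z‖ ^ 2) *
      ((S *ᵥ z.ofLp) i * (S *ᵥ z.ofLp) j - ‖z‖ ^ 2 / Fintype.card (Fin p) * (S * Sᵀ) i j) :=
    fun z => by
      simp only [G, mahal_add_toEuclideanLin hS]
      simp [toLpLin_apply]
  have hint' : Integrable fun z : EuclideanSpace ℝ (Fin p) => ρ (‖z‖ ^ 2) * ‖z‖ ^ 2 := by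
    simpa only [mahal_add_toEuclideanLin hS] using
      (integrable_comp_linearMap_iff volume hT _).mpr (hint.comp_add_left μ)
  have h := integral_comp_linearMap volume hT fun y => G (μ + y)
  rw [integral_congr_ae (.of_forall hG), integral_radial_mul_mulVec_moment_sub_eq_zero hρ hint',
    integral_add_left_eq_self] at h
  exact (smul_eq_zero.mp h.symm).resolve_left (by simpa using hS.ne_zero)

end Mahalanobis

section Truncation

variable {p : ℕ}

theorem integrable_indicator_toNNReal_mul_exp_mul_mahal {φ : ℝ → ℝ} (hφ : Measurable φ)
    (μ : EuclideanSpace ℝ (Fin p)) {V : Matrix (Fin p) (Fin p) ℝ} (hV : V.PosDef) {a : ℝ}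
    (ha : 0 < a) {s : Set ℝ} (hs : MeasurableSet s) (hint : Integrable fun x => φ (mahal x μ V)) :
    Integrable fun x => s.indicator (fun u => ((φ u).toNNReal : ℝ) * Real.exp (-(a⁻¹ * u)))
      (mahal x μ V) * mahal x μ V := by
  have hd := (continuous_mahal μ V).measurable
  have hmeas : Measurable fun u => ((φ u).toNNReal : ℝ) * Real.exp (-(a⁻¹ * u)) := by fun_prop
  refine (hint.norm.const_mul a).mono' (((hmeas.indicator hs).comp hd).mul hd).aestronglyMeasurable
    (.of_forall fun x => ?_)
  have hx := mahal_nonneg hV x μ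
  by_cases hxs : mahal x μ V ∈ s
  · rw [Set.indicator_of_mem hxs, Real.norm_of_nonneg (by positivity)]
    calc _ = ((φ (mahal x μ V)).toNNReal : ℝ) *
          (mahal x μ V * Real.exp (-(a⁻¹ * mahal x μ V))) := by ring
      _ ≤ ‖φ (mahal x μ V)‖ * a := by
          gcongr
          · exact (Real.coe_toNNReal' _).trans_le (max_le (le_abs_self _) (abs_nonneg _))
          · exact mul_exp_neg_inv_mul_le ha _
      _ = a * ‖φ (mahal x μ V)‖ := mul_comm _ _
  · rw [Set.indicator_of_notMem hxs, zero_mul, norm_zero]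
    positivity

theorem setIntegral_centralRegion_exp_smul_eq {E : Type*} [NormedAddCommGroup E]
    [NormedSpace ℝ E] {α a : ℝ} (ha : 0 < a) {μ : EuclideanSpace ℝ (Fin p)}
    {V : Matrix (Fin p) (Fin p) ℝ} {φ : ℝ → ℝ} (hφ : Measurable φ)
    {f : EuclideanSpace ℝ (Fin p) → ℝ} (hf : ∀ x, f x = φ (mahal x μ V))
    {H : Measure (EuclideanSpace ℝ (Fin p))} (hH : H (centralRegion α μ (a • V)) = 0)
    (c d : ENNReal) (g : EuclideanSpace ℝ (Fin p) → E) :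
    ∫ x in centralRegion α μ (a • V), Real.exp (-mahal x μ (a • V)) • g x
        ∂(c • volume.withDensity (fun x => ENNReal.ofReal (f x)) + d • H) =
      c.toReal • ∫ x, (Set.Iio (a * Real.log (1 / α))).indicator
        (fun u => ((φ u).toNNReal : ℝ) * Real.exp (-(a⁻¹ * u))) (mahal x μ V) • g x := by
  have hd := (continuous_mahal μ V).measurable
  have hB := centralRegion_smul α μ V ha
  rw [setIntegral_smul_withDensity_add_smul_eq (funext hf ▸ hφ.comp hd)
    (hB ▸ hd measurableSet_Iio) hH]
  refine congrArg _ (integral_congr_ae (.of_forall fun x => ?_))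
  simp only [NNReal.smul_def, smul_smul, Set.indicator_smul_apply_left, hB, mahal_smul, hf]
  rw [← Set.indicator_comp_right]
  rfl

end Truncation

theorem truncated_estimating_equations_under_contamination_general
    {p : ℕ}
    (α : ℝ)
    (μ0 : EuclideanSpace ℝ (Fin p)) (V0 : Matrix (Fin p) (Fin p) ℝ)
    (hV0 : V0.PosDef)
    (ψ : ℝ → ℝ) (hψmeas : Measurable ψ)
    (f : EuclideanSpace ℝ (Fin p) → ℝ)
    (hf : ∀ x, f x = (Real.sqrt V0.det)⁻¹ * ψ (mahal x μ0 V0))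
    (hf1 : ∫ x, f x = 1)
    (F : Measure (EuclideanSpace ℝ (Fin p)))
    (hF : F = volume.withDensity fun x => ENNReal.ofReal (f x))
    (H : Measure (EuclideanSpace ℝ (Fin p)))
    (astar : ℝ)
    (hsep : ∀ a : ℝ, 0 < a → a ≤ astar → H (centralRegion α μ0 (a • V0)) = 0)
    (π : ℝ)
    (P : Measure (EuclideanSpace ℝ (Fin p)))
    (hP : P = ENNReal.ofReal (1 - π) • F + ENNReal.ofReal π • H) :
    ∀ a : ℝ, 0 < a → a ≤ astar →
      (∫ x in centralRegion α μ0 (a • V0),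
          Real.exp (-(mahal x μ0 (a • V0))) • (x - μ0) ∂P = 0) ∧
      (∀ i j : Fin p,
        ∫ x in centralRegion α μ0 (a • V0),
          Real.exp (-(mahal x μ0 (a • V0))) *
            ((x i - μ0 i) * (x j - μ0 j) - (mahal x μ0 (a • V0) / p) * (a • V0) i j)
          ∂P = 0) := by
  intro a ha haa
  have hφ : Measurable fun u => (Real.sqrt V0.det)⁻¹ * ψ u := measurable_const.mul hψmeas
  have hH := hsep a ha haa
  subst hP hF
  refine ⟨?_, fun i j => ?_⟩
  · rw [setIntegral_centralRegion_exp_smul_eq ha hφ hf hH, integral_radial_mahal_smul_sub_eq_zero,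
      smul_zero]
  · have hint := integrable_indicator_toNNReal_mul_exp_mul_mahal hφ μ0 hV0 ha
      (measurableSet_Iio (a := a * Real.log (1 / α)))
      (funext hf ▸ Integrable.of_integral_ne_zero (hf1 ▸ one_ne_zero))
    have hmoment : ∀ x, mahal x μ0 (a • V0) / p * (a • V0) i j = mahal x μ0 V0 / p * V0 i j :=
      fun x => by
        rw [mahal_smul, Matrix.smul_apply, smul_eq_mul]
        field_simp
    have h := setIntegral_centralRegion_exp_smul_eq ha hφ hf hH
      (ENNReal.ofReal (1 - π)) (ENNReal.ofReal π)
      fun x => (x i - μ0 i) * (x j - μ0 j) - mahal x μ0 V0 / p * V0 i j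
    simp only [smul_eq_mul, integral_radial_mahal_mul_moment_sub_eq_zero
      (Measurable.indicator (by fun_prop) measurableSet_Iio) μ0 hV0 hint i j, mul_zero] at h
    simpa only [hmoment] using h

/-- robustness to contamination, Theorem 6.  Let `F` be the
elliptical distribution with density `f`, `H` any probability measure, and
suppose `F` is centrally `a*`-separable from `H`, i.e. `H(B(μ0, aV0)) = 0` for
all `0 < a ≤ a*`.  Then under the Huber contamination mixture
`P = (1−π) F + π H` with `π ∈ [0,1)`, for every `0 < a ≤ a*` the pair
`(μ, V) = (μ0, a V0)` solves the truncated estimating equations under `P`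
(the matrix equation being read entrywise). -/
theorem truncated_estimating_equations_under_contamination
    {p : ℕ} (hp : 1 ≤ p)
    (α : ℝ) (hα : α ∈ Set.Ioo (0 : ℝ) 1)
    (μ0 : EuclideanSpace ℝ (Fin p)) (V0 : Matrix (Fin p) (Fin p) ℝ)
    (hV0sym : V0.IsSymm) (hV0 : V0.PosDef)
    (ψ : ℝ → ℝ) (hψmeas : Measurable ψ) (hψpos : ∀ u, 0 ≤ u → 0 < ψ u)
    (f : EuclideanSpace ℝ (Fin p) → ℝ)
    (hf : ∀ x, f x = (Real.sqrt V0.det)⁻¹ * ψ (mahal x μ0 V0))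
    (hf1 : ∫ x, f x = 1)
    (F : Measure (EuclideanSpace ℝ (Fin p)))
    (hF : F = volume.withDensity fun x => ENNReal.ofReal (f x))
    (H : Measure (EuclideanSpace ℝ (Fin p))) (hH : IsProbabilityMeasure H)
    (astar : ℝ) (hastar : 0 < astar)
    (hsep : ∀ a : ℝ, 0 < a → a ≤ astar → H (centralRegion α μ0 (a • V0)) = 0)
    (π : ℝ) (hπ0 : 0 ≤ π) (hπ1 : π < 1)
    (P : Measure (EuclideanSpace ℝ (Fin p)))
    (hP : P = ENNReal.ofReal (1 - π) • F + ENNReal.ofReal π • H) :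
    ∀ a : ℝ, 0 < a → a ≤ astar →
      (∫ x in centralRegion α μ0 (a • V0),
          Real.exp (-(mahal x μ0 (a • V0))) • (x - μ0) ∂P = 0) ∧
      (∀ i j : Fin p,
        ∫ x in centralRegion α μ0 (a • V0),
          Real.exp (-(mahal x μ0 (a • V0))) *
            ((x i - μ0 i) * (x j - μ0 j) - (mahal x μ0 (a • V0) / p) * (a • V0) i j)
          ∂P = 0) :=
  truncated_estimating_equations_under_contamination_general α μ0 V0 hV0 ψ hψmeas f hf hf1 F hF H
    astar hsep π P hP
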